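/- arXiv:1609.06893 — 2 statements merged into one kernel-verified Lean document; each statement's English description precedes it below -/
import Mathlib

section
/- Let G be a group, N a subgroup of the center Z(G), and π : G → G/N the quotient map. Let H̄ be a subgroup of G/N, set H := π⁻¹(H̄) and U := π⁻¹(Z_{G/N}(H̄)), where Z_{G/N}(H̄) is the centralizer of H̄ in G/N. Then for every u ∈ U and h ∈ H the commutator [u,h] := uhu⁻¹h⁻¹ lies in N, the map h ↦ [u,h] is a group homomorphism from H to N, the map φ : U → Hom(H,N) sending u to (h ↦ [u,h]) is a group homomorphism, and the kernel of φ is exactly the centralizer Z_G(H) of H in G. -/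
open scoped commutatorElement

/-- Lemma 2.1 of the paper: for `N ≤ Z(G)`, `H := π⁻¹(H̄)`, `U := π⁻¹(Z_{G/N}(H̄))`,
the commutator `[u,h]` lies in `N` for `u ∈ U`, `h ∈ H`; `h ↦ [u,h]` is a homomorphism
`H → N`; `u ↦ (h ↦ [u,h])` is a homomorphism; and its kernel is `Z_G(H)`. -/
theorem stmt0 {G : Type*} [Group G] (N : Subgroup G) [N.Normal]
    (hN : N ≤ Subgroup.center G) (Hbar : Subgroup (G ⧸ N))
    (H : Subgroup G) (hH : H = Hbar.comap (QuotientGroup.mk' N))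
    (U : Subgroup G)
    (hU : U = (Subgroup.centralizer (Hbar : Set (G ⧸ N))).comap (QuotientGroup.mk' N)) :
    (∀ u ∈ U, ∀ h ∈ H, ⁅u, h⁆ ∈ N) ∧
    (∀ u ∈ U, ∀ h₁ ∈ H, ∀ h₂ ∈ H, ⁅u, h₁ * h₂⁆ = ⁅u, h₁⁆ * ⁅u, h₂⁆) ∧
    (∀ u₁ ∈ U, ∀ u₂ ∈ U, ∀ h ∈ H, ⁅u₁ * u₂, h⁆ = ⁅u₁, h⁆ * ⁅u₂, h⁆) ∧
    (∀ u ∈ U, ((∀ h ∈ H, ⁅u, h⁆ = 1) ↔ u ∈ Subgroup.centralizer (H : Set G))) := by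
  have key : ∀ u ∈ U, ∀ h ∈ H, ⁅u, h⁆ ∈ N := by
    intro u hu h hh
    rw [hU, Subgroup.mem_comap] at hu
    rw [hH, Subgroup.mem_comap] at hh
    have hcomm := hu _ hh
    refine (QuotientGroup.eq_one_iff _).mp ?_
    show (QuotientGroup.mk' N) ⁅u, h⁆ = 1
    rw [map_commutatorElement, commutatorElement_eq_one_iff_mul_comm]
    exact hcomm.symm
  have cent : ∀ u ∈ U, ∀ h ∈ H, ∀ x : G, ⁅u, h⁆ * x = x * ⁅u, h⁆ := by
    intro u hu h hh x
    exact (Subgroup.mem_center_iff.mp (hN (key u hu h hh)) x).symm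
  refine ⟨key, ?_, ?_, ?_⟩
  · intro u hu h₁ hh₁ h₂ hh₂
    have e1 : ⁅u, h₁ * h₂⁆ = u * h₁ * (u⁻¹ * ⁅u, h₂⁆) * h₁⁻¹ := by group
    rw [e1]
    simp only [mul_assoc]
    rw [cent u hu h₂ hh₂ h₁⁻¹]
    group
  · intro u₁ hu₁ u₂ hu₂ h hh
    have e1 : ⁅u₁ * u₂, h⁆ = u₁ * ⁅u₂, h⁆ * u₁⁻¹ * ⁅u₁, h⁆ := by group
    rw [e1]
    simp only [mul_assoc]
    rw [cent u₂ hu₂ h hh (u₁⁻¹ * ⁅u₁, h⁆)]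
    group
  · intro u hu
    constructor
    · intro hall
      rw [Subgroup.mem_centralizer_iff]
      intro h hh
      have := (commutatorElement_eq_one_iff_mul_comm).mp (hall h hh)
      exact this.symm
    · intro hc h hh
      rw [commutatorElement_eq_one_iff_mul_comm]
      exact (Subgroup.mem_centralizer_iff.mp hc h hh).symm
end

section
/- Let n ≥ 1 and let H be an irreducible subgroup of SL(n,ℂ). Then the centralizer Z_n(H) of π_n(H) in PSL(n,ℂ) is abelian and every element of Z_n(H) has order dividing n (i.e. Z_n(H) has exponent dividing n). -/
open Matrix

noncomputable section

abbrev SLC (n : ℕ) : Type := Matrix.SpecialLinearGroup (Fin n) ℂ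

def xi (n : ℕ) : ℂ := Complex.exp (2 * Real.pi * Complex.I / n)

lemma xi_pow_self (n : ℕ) (hn : n ≠ 0) : xi n ^ n = 1 := by
  have h : (n : ℂ) ≠ 0 := Nat.cast_ne_zero.mpr hn
  have h2 : (n : ℂ) * (2 * Real.pi * Complex.I / n) = 2 * Real.pi * Complex.I := by
    field_simp
  simp only [xi]
  rw [← Complex.exp_nat_mul, h2, Complex.exp_two_pi_mul_I]

def xiSL (n : ℕ) : SLC n :=
  if hn : n = 0 then 1 else
    ⟨xi n • (1 : Matrix (Fin n) (Fin n) ℂ), by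
      rw [Matrix.det_smul, Matrix.det_one, Fintype.card_fin, mul_one, xi_pow_self n hn]⟩

lemma xiSL_mem_center (n : ℕ) : xiSL n ∈ Subgroup.center (SLC n) := by
  rw [Subgroup.mem_center_iff]
  intro g
  by_cases hn : n = 0
  · have h0 : xiSL n = 1 := dif_pos hn
    rw [h0, mul_one, one_mul]
  · have h0 : xiSL n = ⟨xi n • (1 : Matrix (Fin n) (Fin n) ℂ), by
        rw [Matrix.det_smul, Matrix.det_one, Fintype.card_fin, mul_one, xi_pow_self n hn]⟩ :=
      dif_neg hn
    rw [h0]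
    apply Subtype.ext
    change (g : Matrix (Fin n) (Fin n) ℂ) * (xi n • (1 : Matrix (Fin n) (Fin n) ℂ)) =
      (xi n • (1 : Matrix (Fin n) (Fin n) ℂ)) * (g : Matrix (Fin n) (Fin n) ℂ)
    rw [mul_smul_comm, smul_mul_assoc, mul_one, one_mul]

def centerSL (n : ℕ) : Subgroup (SLC n) := Subgroup.zpowers (xiSL n)

instance centerSL_normal (n : ℕ) : (centerSL n).Normal := by
  constructor
  intro x hx g
  have hc : g * x = x * g :=
    Subgroup.mem_center_iff.mp ((Subgroup.zpowers_le.mpr (xiSL_mem_center n)) hx) g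
  have h : g * x * g⁻¹ = x := by rw [hc, mul_inv_cancel_right]
  rwa [h]

abbrev PSLC (n : ℕ) : Type := SLC n ⧸ centerSL n

def pin (n : ℕ) : SLC n →* PSLC n := QuotientGroup.mk' (centerSL n)

def IsIrreducibleSL (n : ℕ) (H : Subgroup (SLC n)) : Prop :=
  ∀ W : Submodule ℂ (Fin n → ℂ),
    (∀ h ∈ H, ∀ v ∈ W, Matrix.mulVec (h : Matrix (Fin n) (Fin n) ℂ) v ∈ W) →
      W = ⊥ ∨ W = ⊤

def Zc (n : ℕ) (H : Subgroup (SLC n)) : Subgroup (PSLC n) :=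
  Subgroup.centralizer ((H.map (pin n) : Subgroup (PSLC n)) : Set (PSLC n))

def Un (n : ℕ) (H : Subgroup (SLC n)) : Subgroup (SLC n) :=
  (Zc n H).comap (pin n)

def IsIrreduciblePSL (n : ℕ) (K : Subgroup (PSLC n)) : Prop :=
  IsIrreducibleSL n (K.comap (pin n))

def ConjSub {G : Type*} [Group G] (A B : Subgroup G) : Prop :=
  ∃ g : G, A.map (MulAut.conj g).toMonoidHom = B

lemma xiSL_coe (n : ℕ) (hn : n ≠ 0) : (xiSL n : Matrix (Fin n) (Fin n) ℂ) = xi n • 1 := by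
  have h0 : xiSL n = ⟨xi n • (1 : Matrix (Fin n) (Fin n) ℂ), by
      rw [Matrix.det_smul, Matrix.det_one, Fintype.card_fin, mul_one, xi_pow_self n hn]⟩ :=
    dif_neg hn
  rw [h0]

lemma xiSL_pow_n (n : ℕ) (hn : n ≠ 0) : (xiSL n) ^ n = 1 := by
  apply Subtype.ext
  rw [Matrix.SpecialLinearGroup.coe_pow, xiSL_coe n hn, smul_pow, one_pow,
    xi_pow_self n hn, one_smul]
  rfl

lemma scalar_mem_centerSL (n : ℕ) (hn : n ≠ 0) (g : SLC n) (c : ℂ) (hc : c ^ n = 1)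
    (hg : (g : Matrix (Fin n) (Fin n) ℂ) = c • 1) : g ∈ centerSL n := by
  have hprim : IsPrimitiveRoot (xi n) n := Complex.isPrimitiveRoot_exp n hn
  have : NeZero n := ⟨hn⟩
  obtain ⟨i, _, hi⟩ := hprim.eq_pow_of_pow_eq_one hc
  have : g = (xiSL n) ^ i := by
    apply Subtype.ext
    rw [Matrix.SpecialLinearGroup.coe_pow, xiSL_coe n hn, smul_pow, one_pow, hi, hg]
  rw [this]
  exact Subgroup.pow_mem _ (Subgroup.mem_zpowers _) i

lemma scalar_of_mem_centerSL (n : ℕ) (hn : n ≠ 0) (z : SLC n) (hz : z ∈ centerSL n) :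
    ∃ c : ℂ, c ^ n = 1 ∧ (z : Matrix (Fin n) (Fin n) ℂ) = c • 1 := by
  obtain ⟨m, hm⟩ := hz
  have hm' : (xiSL n) ^ m = z := hm
  have hnz : (n : ℤ) ≠ 0 := Int.natCast_ne_zero.mpr hn
  have hmod : (xiSL n) ^ m = (xiSL n) ^ ((m % (n : ℤ)).toNat) := by
    conv_lhs => rw [← Int.mul_ediv_add_emod m (n : ℤ)]
    rw [_root_.zpow_add, _root_.zpow_mul, zpow_natCast, xiSL_pow_n n hn, _root_.one_zpow, one_mul,
      ← zpow_natCast, Int.toNat_of_nonneg (Int.emod_nonneg m hnz)]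
  set k := (m % (n : ℤ)).toNat
  refine ⟨xi n ^ k, ?_, ?_⟩
  · rw [← pow_mul, mul_comm, pow_mul, xi_pow_self n hn, one_pow]
  · rw [← hm', hmod, Matrix.SpecialLinearGroup.coe_pow, xiSL_coe n hn, smul_pow, one_pow]

lemma schurSL (n : ℕ) (hn : 1 ≤ n) (H : Subgroup (SLC n)) (hH : IsIrreducibleSL n H)
    (A : Matrix (Fin n) (Fin n) ℂ)
    (hA : ∀ h ∈ H, A * (h : Matrix (Fin n) (Fin n) ℂ) = (h : Matrix (Fin n) (Fin n) ℂ) * A) :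
    ∃ μ : ℂ, A = μ • 1 := by
  have : Nontrivial (Fin n → ℂ) := by
    have : NeZero n := ⟨Nat.one_le_iff_ne_zero.mp hn⟩
    infer_instance
  obtain ⟨μ, hμ⟩ := Module.End.exists_eigenvalue (Matrix.mulVecLin A)
  refine ⟨μ, ?_⟩
  set W := Module.End.eigenspace (Matrix.mulVecLin A) μ with hW
  have hinv : ∀ h ∈ H, ∀ v ∈ W, Matrix.mulVec (h : Matrix (Fin n) (Fin n) ℂ) v ∈ W := by
    intro h hh v hv
    rw [hW, Module.End.mem_eigenspace_iff, Matrix.mulVecLin_apply] at hv ⊢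
    rw [Matrix.mulVec_mulVec, hA h hh, ← Matrix.mulVec_mulVec, hv, Matrix.mulVec_smul]
  have hWtop : W = ⊤ := by
    rcases hH W hinv with h | h
    · exact absurd h hμ
    · exact h
  funext i j
  have : Matrix.mulVec A (Pi.single j 1) = μ • (Pi.single j 1 : Fin n → ℂ) := by
    have hv : (Pi.single j 1 : Fin n → ℂ) ∈ W := hWtop ▸ Submodule.mem_top
    rw [hW, Module.End.mem_eigenspace_iff, Matrix.mulVecLin_apply] at hv
    exact hv
  have := congrFun this i
  simpa [Matrix.mulVec_single, Matrix.one_apply, Pi.single_apply, mul_comm] using this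

lemma mem_centerSL_of_commute (n : ℕ) (hn : 1 ≤ n) (H : Subgroup (SLC n))
    (hH : IsIrreducibleSL n H) (g : SLC n)
    (hg : ∀ h ∈ H, (g : Matrix (Fin n) (Fin n) ℂ) * h = (h : Matrix (Fin n) (Fin n) ℂ) * g) :
    g ∈ centerSL n := by
  obtain ⟨μ, hμ⟩ := schurSL n hn H hH _ hg
  have hdet : μ ^ n = 1 := by
    have := g.2
    rw [hμ, Matrix.det_smul, Matrix.det_one, Fintype.card_fin, mul_one] at this
    exact this
  exact scalar_mem_centerSL n (Nat.one_le_iff_ne_zero.mp hn) g μ hdet hμ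

section MatCalc
variable {n : ℕ}
abbrev Mat (n : ℕ) := Matrix (Fin n) (Fin n) ℂ

lemma relm_mul {U1 U2 Hm : Mat n} {c1 c2 : ℂ}
    (h1 : U1 * Hm = c1 • (Hm * U1)) (h2 : U2 * Hm = c2 • (Hm * U2)) :
    (U1 * U2) * Hm = (c1 * c2) • (Hm * (U1 * U2)) := by
  calc (U1 * U2) * Hm = U1 * (c2 • (Hm * U2)) := by rw [mul_assoc, h2]
  _ = c2 • ((U1 * Hm) * U2) := by rw [mul_smul_comm, mul_assoc]
  _ = c2 • ((c1 • (Hm * U1)) * U2) := by rw [h1]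
  _ = (c1 * c2) • (Hm * (U1 * U2)) := by
      rw [smul_mul_assoc, smul_smul, mul_comm c2 c1, mul_assoc]

lemma relm_pow {U Hm : Mat n} {c : ℂ} (h1 : U * Hm = c • (Hm * U)) (m : ℕ) :
    U ^ m * Hm = c ^ m • (Hm * U ^ m) := by
  induction m with
  | zero => simp
  | succ k ih =>
      have := relm_mul ih h1
      simpa [pow_succ] using this

lemma relm_inv {U V Hm : Mat n} {c : ℂ} (hc : c ≠ 0)
    (hUV : U * V = 1) (hVU : V * U = 1) (h1 : U * Hm = c • (Hm * U)) :
    V * Hm = c⁻¹ • (Hm * V) := by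
  have h2 : Hm * V = c • (V * Hm) := by
    calc Hm * V = V * (U * Hm) * V := by rw [← mul_assoc, hVU, one_mul]
    _ = V * (c • (Hm * U)) * V := by rw [h1]
    _ = c • (V * Hm * (U * V)) := by
        rw [mul_smul_comm, smul_mul_assoc]
        congr 1
        simp only [mul_assoc]
    _ = c • (V * Hm) := by rw [hUV, mul_one]
  rw [h2, smul_smul, inv_mul_cancel₀ hc, one_smul]

lemma relm_commute {A B B' Hm : Mat n} {c : ℂ} (hc : c ≠ 0)
    (hBB' : B * B' = 1) (hB'B : B' * B = 1)
    (h1 : A * Hm = c • (Hm * A)) (h2 : B * Hm = c • (Hm * B)) :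
    (A * B') * Hm = Hm * (A * B') := by
  have h3 : B' * Hm = c⁻¹ • (Hm * B') := relm_inv hc hBB' hB'B h2
  have := relm_mul h1 h3
  rwa [mul_inv_cancel₀ hc, one_smul] at this

end MatCalc
section MainAux

lemma rel_of_mem_Zc (n : ℕ) (H : Subgroup (SLC n)) (hn : n ≠ 0)
    (u : SLC n) (hu : pin n u ∈ Zc n H) (h : SLC n) (hh : h ∈ H) :
    ∃ c : ℂ, c ^ n = 1 ∧
      (u : Matrix (Fin n) (Fin n) ℂ) * h = c • ((h : Matrix (Fin n) (Fin n) ℂ) * u) := by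
  have hcomm : pin n h * pin n u = pin n u * pin n h :=
    Subgroup.mem_centralizer_iff.mp hu _ ⟨h, hh, rfl⟩
  set w := u * h * (h * u)⁻¹ with hwdef
  have hw : w ∈ centerSL n := by
    have hp : pin n w = 1 := by
      rw [hwdef, _root_.map_mul, _root_.map_mul, _root_.map_inv, _root_.map_mul, ← hcomm]
      group
    exact (QuotientGroup.eq_one_iff w).mp hp
  obtain ⟨c, hcn, hc⟩ := scalar_of_mem_centerSL n hn w hw
  refine ⟨c, hcn, ?_⟩
  have hgrp : u * h = w * (h * u) := by rw [hwdef, inv_mul_cancel_right]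
  calc (u : Matrix (Fin n) (Fin n) ℂ) * h = ((u * h : SLC n) : Matrix (Fin n) (Fin n) ℂ) := rfl
  _ = ((w * (h * u) : SLC n) : Matrix (Fin n) (Fin n) ℂ) := by rw [hgrp]
  _ = (w : Matrix (Fin n) (Fin n) ℂ) * ((h : Matrix (Fin n) (Fin n) ℂ) * u) := rfl
  _ = c • ((h : Matrix (Fin n) (Fin n) ℂ) * u) := by rw [hc, smul_mul_assoc, one_mul]

lemma pow_ne_one_ne_zero {c : ℂ} {n : ℕ} (hn : n ≠ 0) (hc : c ^ n = 1) : c ≠ 0 := by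
  intro h
  rw [h, zero_pow hn] at hc
  exact zero_ne_one hc

end MainAux

/-- Theorem (Result 1): the centralizer of an irreducible subgroup of `PSL(n,ℂ)`
is abelian of exponent dividing `n`. -/
theorem stmt1 (n : ℕ) (hn : 1 ≤ n) (H : Subgroup (SLC n)) (hH : IsIrreducibleSL n H) :
    (∀ a b : Zc n H, a * b = b * a) ∧ (∀ a : Zc n H, a ^ n = 1) := by
  have hn0 : n ≠ 0 := Nat.one_le_iff_ne_zero.mp hn
  constructor
  · intro a b
    obtain ⟨u, hu⟩ := QuotientGroup.mk'_surjective (centerSL n) (a : PSLC n)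
    obtain ⟨v, hv⟩ := QuotientGroup.mk'_surjective (centerSL n) (b : PSLC n)
    have hua : pin n u = (a : PSLC n) := hu
    have hvb : pin n v = (b : PSLC n) := hv
    have hum : pin n u ∈ Zc n H := hua ▸ a.2
    have hvm : pin n v ∈ Zc n H := hvb ▸ b.2
    set g0 := (u * v) * (v * u)⁻¹ with hg0
    have hg0mem : g0 ∈ centerSL n := by
      apply mem_centerSL_of_commute n hn H hH
      intro h hh
      obtain ⟨cu, hcun, hcu⟩ := rel_of_mem_Zc n H hn0 u hum h hh
      obtain ⟨cv, hcvn, hcv⟩ := rel_of_mem_Zc n H hn0 v hvm h hh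
      have h1 : ((u * v : SLC n) : Matrix (Fin n) (Fin n) ℂ) * h
          = (cu * cv) • ((h : Matrix (Fin n) (Fin n) ℂ) * (u * v : SLC n)) := relm_mul hcu hcv
      have h2 : ((v * u : SLC n) : Matrix (Fin n) (Fin n) ℂ) * h
          = (cu * cv) • ((h : Matrix (Fin n) (Fin n) ℂ) * (v * u : SLC n)) := by
        rw [mul_comm cu cv]; exact relm_mul hcv hcu
      have hcne : cu * cv ≠ 0 :=
        mul_ne_zero (pow_ne_one_ne_zero hn0 hcun) (pow_ne_one_ne_zero hn0 hcvn)
      have hBB' : ((v * u : SLC n) : Matrix (Fin n) (Fin n) ℂ) * ((v * u)⁻¹ : SLC n) = 1 := by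
        rw [← Matrix.SpecialLinearGroup.coe_mul, mul_inv_cancel]; rfl
      have hB'B : (((v * u)⁻¹ : SLC n) : Matrix (Fin n) (Fin n) ℂ) * (v * u : SLC n) = 1 := by
        rw [← Matrix.SpecialLinearGroup.coe_mul, inv_mul_cancel]; rfl
      have := relm_commute hcne hBB' hB'B h1 h2
      calc (g0 : Matrix (Fin n) (Fin n) ℂ) * h
          = (((u * v : SLC n) : Matrix (Fin n) (Fin n) ℂ) * ((v * u)⁻¹ : SLC n)) * h := rfl
      _ = (h : Matrix (Fin n) (Fin n) ℂ)
            * (((u * v : SLC n) : Matrix (Fin n) (Fin n) ℂ) * ((v * u)⁻¹ : SLC n)) := this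
      _ = (h : Matrix (Fin n) (Fin n) ℂ) * g0 := rfl
    have hq : pin n (u * v) = pin n (v * u) := by
      have : pin n g0 = 1 := (QuotientGroup.eq_one_iff g0).mpr hg0mem
      rw [hg0, _root_.map_mul, _root_.map_inv] at this
      exact (mul_inv_eq_one).mp this
    apply Subtype.ext
    calc ((a * b : Zc n H) : PSLC n) = (a : PSLC n) * b := rfl
    _ = pin n u * pin n v := by rw [hua, hvb]
    _ = pin n (u * v) := (_root_.map_mul _ _ _).symm
    _ = pin n (v * u) := hq
    _ = pin n v * pin n u := _root_.map_mul _ _ _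
    _ = (b : PSLC n) * a := by rw [hua, hvb]
    _ = ((b * a : Zc n H) : PSLC n) := rfl
  · intro a
    obtain ⟨u, hu⟩ := QuotientGroup.mk'_surjective (centerSL n) (a : PSLC n)
    have hua : pin n u = (a : PSLC n) := hu
    have hum : pin n u ∈ Zc n H := hua ▸ a.2
    have hmem : u ^ n ∈ centerSL n := by
      apply mem_centerSL_of_commute n hn H hH
      intro h hh
      obtain ⟨c, hcn, hc⟩ := rel_of_mem_Zc n H hn0 u hum h hh
      have := relm_pow hc n
      rw [hcn, one_smul] at this
      calc ((u ^ n : SLC n) : Matrix (Fin n) (Fin n) ℂ) * h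
          = ((u : Matrix (Fin n) (Fin n) ℂ)) ^ n * h := by
            rw [Matrix.SpecialLinearGroup.coe_pow]
      _ = (h : Matrix (Fin n) (Fin n) ℂ) * (u : Matrix (Fin n) (Fin n) ℂ) ^ n := this
      _ = (h : Matrix (Fin n) (Fin n) ℂ) * (u ^ n : SLC n) := by
            rw [Matrix.SpecialLinearGroup.coe_pow]
    apply Subtype.ext
    calc ((a ^ n : Zc n H) : PSLC n) = (a : PSLC n) ^ n := rfl
    _ = (pin n u) ^ n := by rw [hua]
    _ = pin n (u ^ n) := (_root_.map_pow _ _ _).symm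
    _ = 1 := (QuotientGroup.eq_one_iff _).mpr hmem
    _ = ((1 : Zc n H) : PSLC n) := rfl
end
end
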